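/- Let n ≥ 2. The subgraph of the edge slide graph E(n) induced by the set of spanning trees of Q_n that reduce over {1} is isomorphic, as a graph, to the Cartesian (box) product Q_{n−1} □ E(n−1) □ E(n−1), where Q_{n−1} is the (n−1)-cube graph and E(n−1) is the edge slide graph of Q_{n−1}. -/

import Mathlib

open SimpleGraph

/-- The `n`-cube: vertices are the subsets of `[n]` (modelled as `Finset (Fin n)`),
with an edge between `X` and `Y` iff their symmetric difference is a singleton. -/
def cube (n : ℕ) : SimpleGraph (Finset (Fin n)) where
  Adj X Y := (symmDiff X Y).card = 1
  symm := by
    constructor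
    intro X Y h
    rwa [symmDiff_comm]
  loopless := by
    constructor
    intro X h
    simp [symmDiff_self, Finset.bot_eq_empty] at h

/-- `T` is a spanning tree of `G` (both graphs on the same vertex set). -/
def IsSpanningTreeOf {V : Type*} (T G : SimpleGraph V) : Prop :=
  T ≤ G ∧ T.IsTree

/-- The edge `e` of the `n`-cube is in direction `i`. -/
def edgeInDir {n : ℕ} (i : Fin n) (e : Sym2 (Finset (Fin n))) : Prop :=
  ∃ X : Finset (Fin n), e = s(X, symmDiff X {i})

/-- The number of edges of `T` in direction `i`. -/
noncomputable def dirCount {n : ℕ} (T : SimpleGraph (Finset (Fin n))) (i : Fin n) : ℕ :=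
  {e | e ∈ T.edgeSet ∧ edgeInDir i e}.ncard

/-- `a` is the signature of the tree `T`. -/
def HasSig {n : ℕ} (T : SimpleGraph (Finset (Fin n))) (a : Fin n → ℕ) : Prop :=
  ∀ i, dirCount T i = a i

/-- `a` is a signature of `Q_n`, i.e. the signature of some spanning tree of the `n`-cube. -/
def IsSignature (n : ℕ) (a : Fin n → ℕ) : Prop :=
  ∃ T, IsSpanningTreeOf T (cube n) ∧ HasSig T a

/-- A section of the set of nonempty subsets of `[n]`. -/
def IsSection {n : ℕ} (ψ : Finset (Fin n) → Fin n) : Prop :=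
  ∀ X : Finset (Fin n), X.Nonempty → ψ X ∈ X

/-- The number of nonempty subsets on which the section `ψ` takes the value `i`. -/
noncomputable def secCount {n : ℕ} (ψ : Finset (Fin n) → Fin n) (i : Fin n) : ℕ :=
  {X : Finset (Fin n) | X.Nonempty ∧ ψ X = i}.ncard

/-- The tuple `a` reduces over `R` : `Σ_{i ∈ R} a i = 2^|R| - 1`. -/
def ReducesOver {n : ℕ} (a : Fin n → ℕ) (R : Finset (Fin n)) : Prop :=
  ∑ i ∈ R, a i = 2 ^ R.card - 1

/-- `a` is reducible: it reduces over some proper nonempty subset of `[n]`. -/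
def IsReducibleSig {n : ℕ} (a : Fin n → ℕ) : Prop :=
  ∃ R : Finset (Fin n), R.Nonempty ∧ R ≠ Finset.univ ∧ ReducesOver a R

/-- `a` is irreducible. -/
def IsIrreducibleSig {n : ℕ} (a : Fin n → ℕ) : Prop := ¬ IsReducibleSig a

/-- `T` is upright: every vertex `X` is at distance `|X|` in `T` from the root `∅`. -/
def IsUpright {n : ℕ} (T : SimpleGraph (Finset (Fin n))) : Prop :=
  ∀ X : Finset (Fin n), T.dist X ∅ = X.card

/-- `ψ` is the section associated to the upright tree `T`: for each nonempty `X`,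
`ψ X ∈ X` and `X - {ψ X}` is the next vertex after `X` on the path in `T` from `X` to `∅`. -/
def IsTreeSection {n : ℕ} (T : SimpleGraph (Finset (Fin n))) (ψ : Finset (Fin n) → Fin n) : Prop :=
  ∀ X : Finset (Fin n), X.Nonempty → ψ X ∈ X ∧ T.Adj X (X.erase (ψ X))

/-- The minimum of `Σ_{i ∈ K} a i` over the sets `K` of `k` directions. -/
noncomputable def minSum {n : ℕ} (a : Fin n → ℕ) (k : ℕ) : ℕ :=
  sInf {m : ℕ | ∃ K : Finset (Fin n), K.card = k ∧ ∑ i ∈ K, a i = m}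

/-- The excess of `a` at `k`. -/
noncomputable def excess {n : ℕ} (a : Fin n → ℕ) (k : ℕ) : ℤ :=
  (minSum a k : ℤ) - (2 ^ k - 1)

/-- The result of sliding the edge `e` in direction `i`. -/
def slideEdge {n : ℕ} (i : Fin n) (e : Sym2 (Finset (Fin n))) : Sym2 (Finset (Fin n)) :=
  Sym2.map (fun X => symmDiff X {i}) e

/-- The edge `e` of the spanning tree `T` of `Q_n` is `i`-slidable. -/
def Slidable (n : ℕ) (T : SimpleGraph (Finset (Fin n))) (i : Fin n)
    (e : Sym2 (Finset (Fin n))) : Prop :=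
  e ∈ T.edgeSet ∧
    IsSpanningTreeOf (SimpleGraph.fromEdgeSet ((T.edgeSet \ {e}) ∪ {slideEdge i e})) (cube n)

/-- The edge set `E` is (the edge set of) a spanning tree of the subgraph of the
`n`-cube induced on the vertex set `s`. -/
def IsSpanningTreeOn (n : ℕ) (s : Set (Finset (Fin n))) (E : Set (Sym2 (Finset (Fin n)))) : Prop :=
  E ⊆ (cube n).edgeSet ∧ (∀ e ∈ E, ∀ v ∈ e, v ∈ s) ∧
    ((SimpleGraph.fromEdgeSet E).induce s).IsTree

/-- The edges of `T` with both endpoints in `s`. -/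
def edgesWithin {n : ℕ} (s : Set (Finset (Fin n))) (T : SimpleGraph (Finset (Fin n))) :
    Set (Sym2 (Finset (Fin n))) :=
  {e | e ∈ T.edgeSet ∧ ∀ v ∈ e, v ∈ s}

/-- The edge `e` of the tree with edge set `E`, spanning the subgraph of the `n`-cube
induced on `s`, is `i`-slidable. -/
def SlidableOn (n : ℕ) (s : Set (Finset (Fin n))) (E : Set (Sym2 (Finset (Fin n))))
    (i : Fin n) (e : Sym2 (Finset (Fin n))) : Prop :=
  e ∈ E ∧ IsSpanningTreeOn n s ((E \ {e}) ∪ {slideEdge i e})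

/-- The number of edges of `T` in direction `i` with both endpoints in `s`. -/
noncomputable def dirCountOn {n : ℕ} (s : Set (Finset (Fin n)))
    (T : SimpleGraph (Finset (Fin n))) (i : Fin n) : ℕ :=
  {e | e ∈ T.edgeSet ∧ edgeInDir i e ∧ ∀ v ∈ e, v ∈ s}.ncard

/-- `T'` is a spanning tree of the `n`-cube obtained from the spanning tree `T` by a
single edge slide. -/
def SlideStep (n : ℕ) (T T' : SimpleGraph (Finset (Fin n))) : Prop :=
  IsSpanningTreeOf T (cube n) ∧ IsSpanningTreeOf T' (cube n) ∧
    ∃ (i : Fin n) (e : Sym2 (Finset (Fin n))), e ∈ T.edgeSet ∧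
      T' = SimpleGraph.fromEdgeSet ((T.edgeSet \ {e}) ∪ {slideEdge i e})

/-- The trees `T` and `T'` are related by a single edge slide. -/
def SlideAdj (n : ℕ) (T T' : SimpleGraph (Finset (Fin n))) : Prop :=
  T ≠ T' ∧ ∃ (i : Fin n) (e : Sym2 (Finset (Fin n))),
    (e ∈ T.edgeSet ∧ T' = SimpleGraph.fromEdgeSet ((T.edgeSet \ {e}) ∪ {slideEdge i e})) ∨
    (e ∈ T'.edgeSet ∧ T = SimpleGraph.fromEdgeSet ((T'.edgeSet \ {e}) ∪ {slideEdge i e}))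

/-- The spanning trees of the `n`-cube. -/
def SpanningTrees (n : ℕ) := {T : SimpleGraph (Finset (Fin n)) // IsSpanningTreeOf T (cube n)}

/-- The edge slide graph `E(n)` of the `n`-cube. -/
def eslide (n : ℕ) : SimpleGraph (SpanningTrees n) where
  Adj T T' := SlideAdj n T.1 T'.1
  symm := by
    constructor
    rintro T T' ⟨hne, i, e, h⟩
    exact ⟨hne.symm, i, e, h.symm⟩
  loopless := by
    constructor
    rintro T ⟨hne, -⟩
    exact hne rfl

/-- The projection `π_R(T)` of `T` to `Q_R`: a graph on the subsets of `R`, with `A`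
adjacent to `B` iff some edge of `T` projects to `{A, B}`. -/
def projTree (n : ℕ) (R : Finset (Fin n)) (T : SimpleGraph (Finset (Fin n))) :
    SimpleGraph ↥{W : Finset (Fin n) | W ⊆ R} where
  Adj A B := A.1 ≠ B.1 ∧ ∃ U V : Finset (Fin n), T.Adj U V ∧ U ∩ R = A.1 ∧ V ∩ R = B.1
  symm := by
    constructor
    rintro A B ⟨hne, U, V, hUV, hU, hV⟩
    exact ⟨hne.symm, V, U, hUV.symm, hV, hU⟩
  loopless := by
    constructor
    rintro A ⟨hne, -⟩
    exact hne rfl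

/-- The projected edge set `π_R(T)`: images under `π_R` of the edges of `T` in
directions belonging to `R`. -/
def projEdges {n : ℕ} (R : Finset (Fin n)) (T : SimpleGraph (Finset (Fin n))) :
    Set (Sym2 (Finset (Fin n))) :=
  {f | ∃ e ∈ T.edgeSet, (∃ i ∈ R, edgeInDir i e) ∧ f = Sym2.map (· ∩ R) e}

/-- The decomposition `T ↦ (F_T, (T(R,X))_{X ⊆ R})` of a tree reducing over `R`. -/
def decompose (n : ℕ) (R : Finset (Fin n)) (T : SimpleGraph (Finset (Fin n))) :
    Set (Sym2 (Finset (Fin n))) ×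
      ((X : Finset (Fin n)) → X ⊆ R → SimpleGraph ↥{W : Finset (Fin n) | W ∩ R = X}) :=
  ⟨{e | e ∈ T.edgeSet ∧ ∃ i ∈ R, edgeInDir i e},
   fun X _ => T.induce {W : Finset (Fin n) | W ∩ R = X}⟩

/-- `s` is the least index such that `ε_k(a) = 0` for all `s ≤ k ≤ n`; i.e. the
entries of (an ordered) `a` with index `≤ s` form the unsaturated part of `a`. -/
def UnsatIndex (n : ℕ) (a : Fin n → ℕ) (s : ℕ) : Prop :=
  (∀ k, s ≤ k → k ≤ n → excess a k = 0) ∧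
    ∀ s' < s, ¬ (∀ k, s' ≤ k → k ≤ n → excess a k = 0)

/-- The restriction of `a` to its first `s` entries is reducible (as a tuple of length `s`). -/
def ReducibleBelow {n : ℕ} (a : Fin n → ℕ) (s : ℕ) : Prop :=
  ∃ R : Finset (Fin n), R.Nonempty ∧ (∀ i ∈ R, (i : ℕ) < s) ∧ R.card < s ∧
    ∑ i ∈ R, a i = 2 ^ R.card - 1

/-- `a` is strictly reducible: it is reducible and its unsaturated part is reducible. -/
def StrictlyReducible (n : ℕ) (a : Fin n → ℕ) : Prop :=
  IsReducibleSig a ∧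
    ∃ (σ : Equiv.Perm (Fin n)) (s : ℕ), Monotone (a ∘ σ) ∧
      UnsatIndex n (a ∘ σ) s ∧ ReducibleBelow (a ∘ σ) s

/-!
Direction `0` (the paper's direction 1) splits `Q_{m+1}` into two layers `layer false` and
`layer true`, each a copy of `Q_m`, matched by the direction-`0` edges. A spanning tree that
reduces over `{0}` has exactly one direction-`0` edge, the bridge at some `X ⊆ [m]`, and it is
the union of that bridge with its two layer restrictions. Since a graph that crosses a cut in a
single edge is a tree iff both sides are, `(X, T₀, T₁) ↦ T₀ ∪ T₁ ∪ {bridge X}` is a bijection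
from bridge positions and pairs of spanning trees of `Q_m` onto the trees reducing over `{0}`.

A slide in direction `0` either maps the bridge to itself or moves a layer edge to the other
layer, which disconnects that layer; so it never leads to another tree reducing over `{0}`.
A slide in direction `j + 1` either moves the bridge from `X` to `X ⊕ {j}`, an edge of `Q_m`,
or is an edge slide inside one layer. These are the three kinds of edges of
`Q_m □ E(m) □ E(m)`.
-/

namespace SimpleGraph

section Cut

variable {V : Type*} {G : SimpleGraph V} (σ : V → Bool) {a b : V}

lemma Walk.even_count_edges_iff [DecidableEq V] (hσ : σ a ≠ σ b)
    (hcut : ∀ ⦃u v⦄, G.Adj u v → σ u ≠ σ v → s(u, v) = s(a, b)) {u v : V} (p : G.Walk u v) :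
    Even (p.edges.count s(a, b)) ↔ σ u = σ v := by
  induction p with
  | nil => simp
  | @cons u w v h p ih =>
    rw [edges_cons, List.count_cons]
    by_cases huw : σ u = σ w
    · have : s(u, w) ≠ s(a, b) := by
        rintro he
        rcases Sym2.eq_iff.mp he with ⟨rfl, rfl⟩ | ⟨rfl, rfl⟩
        exacts [hσ huw, hσ huw.symm]
      simp [this, ih, huw]
    · simp only [hcut h huw, beq_self_eq_true, if_true, Nat.even_add_one, ih, Bool.eq_not.mpr huw]
      cases σ w <;> cases σ v <;> simp

lemma Walk.IsTrail.notMem_edges [DecidableEq V] (hσ : σ a ≠ σ b)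
    (hcut : ∀ ⦃u v⦄, G.Adj u v → σ u ≠ σ v → s(u, v) = s(a, b))
    {u v : V} {p : G.Walk u v} (hp : p.IsTrail) (huv : σ u = σ v) : s(a, b) ∉ p.edges := by
  obtain ⟨k, hk⟩ := (p.even_count_edges_iff σ hσ hcut).mpr huv
  have := hp.count_edges_le_one s(a, b)
  rw [← List.count_eq_zero]
  omega

lemma Walk.side_eq_of_notMem_edges (hcut : ∀ ⦃u v⦄, G.Adj u v → σ u ≠ σ v → s(u, v) = s(a, b))
    {u v : V} (p : G.Walk u v) (hp : s(a, b) ∉ p.edges) : ∀ x ∈ p.support, σ x = σ u := by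
  induction p with
  | nil => simp
  | @cons u w v h p ih =>
    simp only [edges_cons, List.mem_cons, not_or] at hp
    have huw : σ u = σ w := by_contra fun huw => hp.1 (hcut h huw).symm
    simpa [huw] using ih hp.2

theorem isTree_iff_forall_induce_isTree (hab : G.Adj a b) (hσ : σ a ≠ σ b)
    (hcut : ∀ ⦃u v⦄, G.Adj u v → σ u ≠ σ v → s(u, v) = s(a, b)) :
    G.IsTree ↔ ∀ β, (G.induce {v | σ v = β}).IsTree := by
  classical
  have hside (β : Bool) : σ a = β ∨ σ b = β := by
    cases h : σ a <;> cases β <;> simp_all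
  constructor
  · intro hG β
    have : Nonempty {v | σ v = β} := (hside β).elim (fun h => ⟨⟨a, h⟩⟩) (fun h => ⟨⟨b, h⟩⟩)
    refine ⟨⟨fun ⟨u, hu⟩ ⟨v, hv⟩ => ?_⟩, hG.isAcyclic.induce _⟩
    obtain ⟨p, hp⟩ := (hG.connected.preconnected u v).exists_isPath
    have hsupp := p.side_eq_of_notMem_edges σ hcut
      (hp.isTrail.notMem_edges σ hσ hcut (hu.trans hv.symm))
    exact ⟨p.induce _ fun x hx => (hsupp x hx).trans hu⟩
  · intro hS
    have hreach (x : V) : G.Reachable a x := by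
      have hside_reach (y : V) (hy : σ y = σ x) : G.Reachable y x :=
        ((hS (σ x)).connected.preconnected ⟨y, hy⟩ ⟨x, rfl⟩).map (Embedding.induce _).toHom
      exact (hside (σ x)).elim (hside_reach a) (fun h => hab.reachable.trans (hside_reach b h))
    have : Nonempty V := ⟨a⟩
    refine ⟨⟨fun x y => (hreach x).symm.trans (hreach y)⟩, fun u c hc => ?_⟩
    have hsupp := c.side_eq_of_notMem_edges σ hcut (hc.isTrail.notMem_edges σ hσ hcut rfl)
    refine (hS (σ u)).isAcyclic (c.induce {v | σ v = σ u} hsupp) ?_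
    rw [← Walk.isCycle_map_iff_of_injective (f := (Embedding.induce (G := G) _).toHom)
      (Embedding.induce (G := G) _).injective, Walk.map_induce]
    exact hc

end Cut

variable {V W : Type*}

lemma IsTree.eq_of_le {T T' : SimpleGraph V} (hT : T.IsTree) (hT' : T'.Connected) (h : T' ≤ T) :
    T' = T :=
  (isTree_iff_minimal_connected.mp hT).eq_of_le hT' h

def replaceEdge (G : SimpleGraph V) (e e' : Sym2 V) : SimpleGraph V :=
  fromEdgeSet ((G.edgeSet \ {e}) ∪ {e'})

lemma replaceEdge_adj {G : SimpleGraph V} {e e' : Sym2 V} {u v : V} :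
    (G.replaceEdge e e').Adj u v ↔ (G.Adj u v ∧ s(u, v) ≠ e ∨ s(u, v) = e') ∧ u ≠ v := by
  simp only [replaceEdge, fromEdgeSet_adj, Set.mem_union, Set.mem_sdiff, mem_edgeSet,
    Set.mem_singleton_iff]

lemma replaceEdge_self {G : SimpleGraph V} {e : Sym2 V} (he : e ∈ G.edgeSet) :
    G.replaceEdge e e = G := by
  rw [replaceEdge, Set.sdiff_union_self, Set.union_singleton, Set.insert_eq_of_mem he,
    fromEdgeSet_edgeSet]

lemma replaceEdge_le {G H : SimpleGraph V} {e e' : Sym2 V} (hG : G ≤ H) (he' : e' ∈ H.edgeSet) :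
    G.replaceEdge e e' ≤ H := by
  rw [replaceEdge, fromEdgeSet_le]
  rintro f ⟨⟨hf, -⟩ | rfl, -⟩
  exacts [edgeSet_mono hG hf, he']

lemma comap_replaceEdge {f : W → V} (hf : Function.Injective f) (G : SimpleGraph V)
    (e e' : Sym2 V) :
    (G.replaceEdge e e').comap f =
      fromEdgeSet (((G.comap f).edgeSet \ Sym2.map f ⁻¹' {e}) ∪ Sym2.map f ⁻¹' {e'}) := by
  ext u v
  have : G.Adj (f u) (f v) → u ≠ v := fun h huv => h.ne (congrArg f huv)
  simp [replaceEdge, hf.ne_iff]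
  tauto

end SimpleGraph

lemma Sym2.preimage_map_singleton_map {α β : Type*} {f : α → β} (hf : Function.Injective f)
    (e : Sym2 α) : Sym2.map f ⁻¹' {e.map f} = {e} := by
  rw [← Set.image_singleton, (Sym2.map.injective hf).preimage_image]

open Finset

lemma cube_adj_iff_exists_symmDiff {n : ℕ} {X X' : Finset (Fin n)} :
    (cube n).Adj X X' ↔ ∃ j, X' = symmDiff X {j} := by
  change (symmDiff X X').card = 1 ↔ _
  rw [card_eq_one]
  refine exists_congr fun j => ⟨fun h => ?_, fun h => ?_⟩
  · rw [← h, symmDiff_symmDiff_cancel_left]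
  · rw [h, symmDiff_symmDiff_cancel_left]

lemma slideEdge_mem_edgeSet_cube {n : ℕ} (i : Fin n) {e : Sym2 (Finset (Fin n))}
    (he : e ∈ (cube n).edgeSet) : slideEdge i e ∈ (cube n).edgeSet := by
  induction e with
  | _ X Y =>
    change (symmDiff (symmDiff X {i}) (symmDiff Y {i})).card = 1
    rwa [symmDiff_symmDiff_symmDiff_comm, symmDiff_self, symmDiff_bot]

section Layer

variable {m : ℕ}

lemma finset_ext_zero_succ {Y Z : Finset (Fin (m + 1))} (h0 : 0 ∈ Y ↔ 0 ∈ Z)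
    (hs : ∀ j : Fin m, j.succ ∈ Y ↔ j.succ ∈ Z) : Y = Z := by
  ext i
  cases i using Fin.cases
  exacts [h0, hs _]

def layer (b : Bool) (X : Finset (Fin m)) : Finset (Fin (m + 1)) :=
  bif b then insert 0 (X.map (Fin.succEmb m)) else X.map (Fin.succEmb m)

@[simp] lemma zero_mem_layer {b : Bool} {X : Finset (Fin m)} : 0 ∈ layer b X ↔ b = true := by
  cases b <;> simp [layer, Fin.succ_ne_zero]

@[simp] lemma succ_mem_layer {b : Bool} {X : Finset (Fin m)} {j : Fin m} :
    j.succ ∈ layer b X ↔ j ∈ X := by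
  cases b <;> simp [layer, Fin.succ_ne_zero]

@[simp] lemma layer_inj {b b' : Bool} {X X' : Finset (Fin m)} :
    layer b X = layer b' X' ↔ b = b' ∧ X = X' := by
  refine ⟨fun h => ⟨?_, ?_⟩, by rintro ⟨rfl, rfl⟩; rfl⟩
  · simpa using congrArg (0 ∈ ·) h
  · ext j
    simpa using congrArg (j.succ ∈ ·) h

lemma layer_injective (b : Bool) : Function.Injective (layer (m := m) b) :=
  fun _ _ h => (layer_inj.mp h).2

def layerEmb (b : Bool) : Finset (Fin m) ↪ Finset (Fin (m + 1)) := ⟨layer b, layer_injective b⟩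

lemma exists_layer_eq (Y : Finset (Fin (m + 1))) : ∃ b X, layer b X = Y :=
  ⟨decide (0 ∈ Y), univ.filter (fun j => j.succ ∈ Y), finset_ext_zero_succ (by simp) (by simp)⟩

lemma range_layer (b : Bool) : Set.range (layer (m := m) b) = {Y | decide (0 ∈ Y) = b} := by
  ext Y
  obtain ⟨b', X, rfl⟩ := exists_layer_eq Y
  simp [eq_comm]

lemma symmDiff_layer (b b' : Bool) (X X' : Finset (Fin m)) :
    symmDiff (layer b X) (layer b' X') = layer (xor b b') (symmDiff X X') := by
  apply finset_ext_zero_succ <;> intros <;> cases b <;> cases b' <;> simp [mem_symmDiff]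

lemma card_layer (b : Bool) (X : Finset (Fin m)) : (layer b X).card = X.card + b.toNat := by
  cases b <;> simp [layer, card_insert_of_notMem, Fin.succ_ne_zero]

lemma symmDiff_layer_zero (b : Bool) (X : Finset (Fin m)) :
    symmDiff (layer b X) {0} = layer (!b) X := by
  have : ({0} : Finset (Fin (m + 1))) = layer true ∅ :=
    finset_ext_zero_succ (by simp) (by simp [Fin.succ_ne_zero])
  simp [this, symmDiff_layer]

lemma symmDiff_layer_succ (b : Bool) (X : Finset (Fin m)) (j : Fin m) :
    symmDiff (layer b X) {j.succ} = layer b (symmDiff X {j}) := by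
  have : ({j.succ} : Finset (Fin (m + 1))) = layer false {j} :=
    finset_ext_zero_succ (by simp [(Fin.succ_ne_zero j).symm]) (by simp)
  simp [this, symmDiff_layer]

lemma cube_adj_layer {b b' : Bool} {X X' : Finset (Fin m)} :
    (cube (m + 1)).Adj (layer b X) (layer b' X') ↔
      b = b' ∧ (cube m).Adj X X' ∨ b ≠ b' ∧ X = X' := by
  simp only [cube, symmDiff_layer, card_layer]
  cases b <;> cases b' <;> simp [card_eq_zero]

lemma comap_layer_cube (b : Bool) : (cube (m + 1)).comap (layer b) = cube m := by
  ext X Y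
  simp [cube_adj_layer]

lemma map_layer_mem_edgeSet_cube (b : Bool) {e : Sym2 (Finset (Fin m))}
    (he : e ∈ (cube m).edgeSet) : e.map (layer b) ∈ (cube (m + 1)).edgeSet := by
  induction e with
  | _ u v => simpa [cube_adj_layer] using he

lemma slideEdge_zero_map_layer (b : Bool) (e : Sym2 (Finset (Fin m))) :
    slideEdge 0 (e.map (layer b)) = e.map (layer (!b)) := by
  simp only [slideEdge, Sym2.map_map]
  congr 1
  funext X
  exact symmDiff_layer_zero b X

lemma slideEdge_succ_map_layer (b : Bool) (e : Sym2 (Finset (Fin m))) (j : Fin m) :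
    slideEdge j.succ (e.map (layer b)) = (slideEdge j e).map (layer b) := by
  simp only [slideEdge, Sym2.map_map]
  congr 1
  funext X
  exact symmDiff_layer_succ b X j

lemma preimage_map_layer_map_layer {b b' : Bool} (hb : b ≠ b') (e : Sym2 (Finset (Fin m))) :
    Sym2.map (layer b) ⁻¹' {e.map (layer b')} = ∅ := by
  refine Set.eq_empty_of_forall_notMem fun e' he' => ?_
  induction e with
  | _ u v =>
    induction e' with
    | _ x y => cases b <;> cases b' <;> simp_all

end Layer

section Bridge

variable {m : ℕ}

def bridge (X : Finset (Fin m)) : Sym2 (Finset (Fin (m + 1))) := s(layer false X, layer true X)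

lemma bridge_injective : Function.Injective (bridge (m := m)) := by
  intro X X' h
  simpa [bridge] using h

lemma bridge_mem_edgeSet_cube (X : Finset (Fin m)) : bridge X ∈ (cube (m + 1)).edgeSet := by
  simp [bridge, cube_adj_layer]

lemma bridge_ne_map_layer (X : Finset (Fin m)) (b : Bool) (e : Sym2 (Finset (Fin m))) :
    bridge X ≠ e.map (layer b) := by
  induction e with
  | _ u v => cases b <;> simp [bridge]

lemma preimage_map_layer_bridge (b : Bool) (X : Finset (Fin m)) :
    Sym2.map (layer b) ⁻¹' {bridge X} = ∅ :=
  Set.eq_empty_of_forall_notMem fun e he => bridge_ne_map_layer X b e he.symm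

lemma slideEdge_zero_bridge (X : Finset (Fin m)) : slideEdge 0 (bridge X) = bridge X := by
  simp [slideEdge, bridge, symmDiff_layer_zero, Sym2.eq_swap]

lemma slideEdge_succ_bridge (X : Finset (Fin m)) (j : Fin m) :
    slideEdge j.succ (bridge X) = bridge (symmDiff X {j}) := by
  simp [slideEdge, bridge, symmDiff_layer_succ]

lemma edgeInDir_zero_iff {e : Sym2 (Finset (Fin (m + 1)))} :
    edgeInDir 0 e ↔ ∃ X, e = bridge X := by
  constructor
  · rintro ⟨Y, rfl⟩
    obtain ⟨b, X, rfl⟩ := exists_layer_eq Y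
    refine ⟨X, ?_⟩
    cases b <;> simp [symmDiff_layer_zero, bridge, Sym2.eq_swap]
  · rintro ⟨X, rfl⟩
    exact ⟨layer false X, by simp [symmDiff_layer_zero, bridge]⟩

lemma dirCount_zero_eq_one_iff {G : SimpleGraph (Finset (Fin (m + 1)))} :
    dirCount G 0 = 1 ↔ ∃ X, ∀ Y, G.Adj (layer false Y) (layer true Y) ↔ Y = X := by
  have : {e | e ∈ G.edgeSet ∧ edgeInDir 0 e} =
      bridge '' {Y | G.Adj (layer false Y) (layer true Y)} := by
    ext e
    simp only [Set.mem_ofPred_eq, edgeInDir_zero_iff, Set.mem_image]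
    constructor
    · rintro ⟨he, Y, rfl⟩
      exact ⟨Y, he, rfl⟩
    · rintro ⟨Y, hY, rfl⟩
      exact ⟨hY, Y, rfl⟩
  rw [dirCount, this, Set.ncard_image_of_injective _ bridge_injective, Set.ncard_eq_one]
  simp [Set.ext_iff]

end Bridge

section Glue

variable {m : ℕ}

def glue (X : Finset (Fin m)) (S : Bool → SimpleGraph (Finset (Fin m))) :
    SimpleGraph (Finset (Fin (m + 1))) :=
  (⨆ b, (S b).map (layerEmb b)) ⊔ edge (layer false X) (layer true X)

variable {X : Finset (Fin m)} {S : Bool → SimpleGraph (Finset (Fin m))}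

lemma glue_adj_layer {b b' : Bool} {u v : Finset (Fin m)} :
    (glue X S).Adj (layer b u) (layer b' v) ↔ b = b' ∧ (S b).Adj u v ∨ b ≠ b' ∧ u = X ∧ v = X := by
  simp only [glue, sup_adj, iSup_adj, map_adj, edge_adj]
  cases b <;> cases b' <;> simp [layerEmb]

lemma comap_glue (b : Bool) : (glue X S).comap (layer b) = S b := by
  ext u v
  simp [glue_adj_layer]

lemma glue_adj_bridge_iff {Y : Finset (Fin m)} :
    (glue X S).Adj (layer false Y) (layer true Y) ↔ Y = X := by
  simp [glue_adj_layer]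

lemma mem_edgeSet_glue {e : Sym2 (Finset (Fin (m + 1)))} :
    e ∈ (glue X S).edgeSet ↔ e = bridge X ∨ ∃ b, ∃ e₀ ∈ (S b).edgeSet, e = e₀.map (layer b) := by
  constructor
  · intro he
    induction e with
    | _ Y Z =>
      obtain ⟨b, u, rfl⟩ := exists_layer_eq Y
      obtain ⟨b', v, rfl⟩ := exists_layer_eq Z
      rcases glue_adj_layer.mp he with ⟨rfl, h⟩ | ⟨hb, rfl, rfl⟩
      · exact Or.inr ⟨b, s(u, v), h, rfl⟩
      · left
        cases b <;> cases b' <;> simp_all [bridge, Sym2.eq_swap]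
  · rintro (rfl | ⟨b, e₀, he₀, rfl⟩)
    · exact glue_adj_bridge_iff.mpr rfl
    · induction e₀ with
      | _ u v => simpa [glue_adj_layer] using he₀

lemma glue_inj {X' : Finset (Fin m)} {S' : Bool → SimpleGraph (Finset (Fin m))} :
    glue X S = glue X' S' ↔ X = X' ∧ S = S' := by
  refine ⟨fun h => ⟨?_, funext fun b => ?_⟩, by rintro ⟨rfl, rfl⟩; rfl⟩
  · have := (glue_adj_bridge_iff (X := X) (S := S) (Y := X)).mpr rfl
    rwa [h, glue_adj_bridge_iff] at this
  · rw [← comap_glue (X := X) (S := S) b, h, comap_glue]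

lemma glue_le_cube (hS : ∀ b, S b ≤ cube m) : glue X S ≤ cube (m + 1) := by
  intro Y Z h
  obtain ⟨b, u, rfl⟩ := exists_layer_eq Y
  obtain ⟨b', v, rfl⟩ := exists_layer_eq Z
  rw [cube_adj_layer]
  rcases glue_adj_layer.mp h with ⟨rfl, hadj⟩ | ⟨hb, rfl, rfl⟩
  exacts [Or.inl ⟨rfl, hS b hadj⟩, Or.inr ⟨hb, rfl⟩]

lemma isTree_glue_iff : (glue X S).IsTree ↔ ∀ b, (S b).IsTree := by
  have hcut : ∀ ⦃Y Z⦄, (glue X S).Adj Y Z → decide (0 ∈ Y) ≠ decide (0 ∈ Z) →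
      s(Y, Z) = s(layer false X, layer true X) := by
    intro Y Z h hYZ
    obtain ⟨b, u, rfl⟩ := exists_layer_eq Y
    obtain ⟨b', v, rfl⟩ := exists_layer_eq Z
    rcases glue_adj_layer.mp h with ⟨rfl, -⟩ | ⟨hb, rfl, rfl⟩
    · simp at hYZ
    · cases b <;> cases b' <;> simp_all [Sym2.eq_swap]
  rw [isTree_iff_forall_induce_isTree (fun Y => decide (0 ∈ Y)) (glue_adj_bridge_iff.mpr rfl)
    (by simp) hcut]
  refine forall_congr' fun b => ?_
  rw [← comap_glue (X := X) (S := S) b, ← range_layer b]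
  exact (Embedding.comap (layerEmb b) (glue X S)).isoInduceRange.isTree_iff.symm

lemma isSpanningTreeOf_glue (hS : ∀ b, IsSpanningTreeOf (S b) (cube m)) :
    IsSpanningTreeOf (glue X S) (cube (m + 1)) :=
  ⟨glue_le_cube fun b => (hS b).1, isTree_glue_iff.mpr fun b => (hS b).2⟩

lemma dirCount_glue : dirCount (glue X S) 0 = 1 :=
  dirCount_zero_eq_one_iff.mpr ⟨X, fun _ => glue_adj_bridge_iff⟩

lemma eq_glue {G : SimpleGraph (Finset (Fin (m + 1)))} (hG : G ≤ cube (m + 1))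
    (hX : ∀ Y, G.Adj (layer false Y) (layer true Y) ↔ Y = X) :
    G = glue X (fun b => G.comap (layer b)) := by
  have hcross (b : Bool) (Y : Finset (Fin m)) : G.Adj (layer b Y) (layer (!b) Y) ↔ Y = X := by
    cases b
    exacts [hX Y, G.adj_comm _ _ |>.trans (hX Y)]
  ext Y Z
  obtain ⟨b, u, rfl⟩ := exists_layer_eq Y
  obtain ⟨b', v, rfl⟩ := exists_layer_eq Z
  rw [glue_adj_layer, comap_adj]
  by_cases hb : b = b'
  · subst hb
    simp
  obtain rfl : b' = !b := by cases b <;> cases b' <;> simp_all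
  constructor
  · intro h
    obtain rfl : u = v := by simpa using cube_adj_layer.mp (hG h)
    exact Or.inr ⟨hb, (hcross b u).mp h, (hcross b u).mp h⟩
  · rintro (⟨h, -⟩ | ⟨-, rfl, rfl⟩)
    exacts [absurd h hb, (hcross b _).mpr rfl]

lemma eq_glue_iff {G : SimpleGraph (Finset (Fin (m + 1)))} (hG : G ≤ cube (m + 1)) :
    G = glue X S ↔
      (∀ b, G.comap (layer b) = S b) ∧ ∀ Y, G.Adj (layer false Y) (layer true Y) ↔ Y = X := by
  refine ⟨?_, fun ⟨hS, hX⟩ => (eq_glue hG hX).trans (congrArg _ (funext hS))⟩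
  rintro rfl
  exact ⟨comap_glue, fun _ => glue_adj_bridge_iff⟩

lemma exists_eq_glue {T : SimpleGraph (Finset (Fin (m + 1)))}
    (hT : IsSpanningTreeOf T (cube (m + 1))) (h : dirCount T 0 = 1) :
    ∃ X S, (∀ b, IsSpanningTreeOf (S b) (cube m)) ∧ T = glue X S := by
  obtain ⟨X, hX⟩ := dirCount_zero_eq_one_iff.mp h
  have hglue := eq_glue hT.1 hX
  refine ⟨X, _, fun b => ⟨?_, isTree_glue_iff.mp (hglue ▸ hT.2) b⟩, hglue⟩
  exact comap_layer_cube (m := m) b ▸ comap_monotone (layerEmb b) hT.1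

end Glue

section Slide

variable {m : ℕ} {X : Finset (Fin m)} {S : Bool → SimpleGraph (Finset (Fin m))}

lemma glue_replaceEdge_bridge (hS : ∀ b, S b ≤ cube m) (X' : Finset (Fin m)) :
    (glue X S).replaceEdge (bridge X) (bridge X') = glue X' S := by
  rw [eq_glue_iff (replaceEdge_le (glue_le_cube hS) (bridge_mem_edgeSet_cube X'))]
  refine ⟨fun b => ?_, fun Y => ?_⟩
  · rw [comap_replaceEdge (layer_injective b), preimage_map_layer_bridge,
      preimage_map_layer_bridge, comap_glue, Set.sdiff_empty, Set.union_empty, fromEdgeSet_edgeSet]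
  · rw [replaceEdge_adj, ← bridge]
    simp [glue_adj_bridge_iff, bridge_injective.eq_iff]

lemma glue_replaceEdge_map_layer (hS : ∀ b, S b ≤ cube m) (b : Bool) (e₀ : Sym2 (Finset (Fin m)))
    {e₀' : Sym2 (Finset (Fin m))} (he₀' : e₀' ∈ (cube m).edgeSet) :
    (glue X S).replaceEdge (e₀.map (layer b)) (e₀'.map (layer b)) =
      glue X (Function.update S b ((S b).replaceEdge e₀ e₀')) := by
  rw [eq_glue_iff (replaceEdge_le (glue_le_cube hS) (map_layer_mem_edgeSet_cube b he₀'))]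
  refine ⟨fun c => ?_, fun Y => ?_⟩
  · rw [comap_replaceEdge (layer_injective c), comap_glue]
    by_cases hc : c = b
    · subst hc
      rw [Sym2.preimage_map_singleton_map (layer_injective c),
        Sym2.preimage_map_singleton_map (layer_injective c), Function.update_self]
      rfl
    · rw [preimage_map_layer_map_layer hc, preimage_map_layer_map_layer hc,
        Function.update_of_ne hc, Set.sdiff_empty, Set.union_empty, fromEdgeSet_edgeSet]
  · rw [replaceEdge_adj, ← bridge]
    simp [glue_adj_bridge_iff, bridge_ne_map_layer]

/-- Layer `b` would become a connected proper subgraph of the tree `S b`. -/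
lemma glue_replaceEdge_flip_ne {X' : Finset (Fin m)} {S' : Bool → SimpleGraph (Finset (Fin m))}
    {b : Bool} (hS : (S b).IsTree) (hS' : (S' b).Connected) {e₀ : Sym2 (Finset (Fin m))}
    (he₀ : e₀ ∈ (S b).edgeSet) :
    (glue X S).replaceEdge (e₀.map (layer b)) (e₀.map (layer (!b))) ≠ glue X' S' := by
  intro h
  have hb := congrArg (SimpleGraph.comap (layer b)) h
  rw [comap_glue, comap_replaceEdge (layer_injective b), comap_glue,
    Sym2.preimage_map_singleton_map (layer_injective b),
    preimage_map_layer_map_layer (by simp), Set.union_empty] at hb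
  have hle : S' b ≤ S b := by
    rw [← hb, fromEdgeSet_le]
    exact fun e he => he.1.1
  rw [← hS.eq_of_le hS' hle, ← hb] at he₀
  simp at he₀

/-- Unlike `SlideAdj`, this allows the slide to leave `T` unchanged. -/
def IsSlide (n : ℕ) (T T' : SimpleGraph (Finset (Fin n))) : Prop :=
  ∃ i e, e ∈ T.edgeSet ∧ T' = T.replaceEdge e (slideEdge i e)

lemma slideAdj_iff {n : ℕ} {T T' : SimpleGraph (Finset (Fin n))} :
    SlideAdj n T T' ↔ T ≠ T' ∧ (IsSlide n T T' ∨ IsSlide n T' T) := by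
  simp only [SlideAdj, IsSlide, exists_or]
  rfl

lemma isSlide_glue_iff {X' : Finset (Fin m)} {S' : Bool → SimpleGraph (Finset (Fin m))}
    (hS : ∀ b, IsSpanningTreeOf (S b) (cube m)) (hS' : ∀ b, (S' b).Connected) :
    IsSlide (m + 1) (glue X S) (glue X' S') ↔
      X' = X ∧ S' = S ∨ (cube m).Adj X X' ∧ S' = S ∨
        X' = X ∧ ∃ b, IsSlide m (S b) (S' b) ∧ S' (!b) = S (!b) := by
  have hle b := (hS b).1
  have hbridge : bridge X ∈ (glue X S).edgeSet := mem_edgeSet_glue.mpr (Or.inl rfl)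
  constructor
  · rintro ⟨i, e, he, h⟩
    rcases mem_edgeSet_glue.mp he with rfl | ⟨b, e₀, he₀, rfl⟩ <;>
      rcases Fin.eq_zero_or_eq_succ i with rfl | ⟨j, rfl⟩
    · rw [slideEdge_zero_bridge, replaceEdge_self he, glue_inj] at h
      exact Or.inl h
    · rw [slideEdge_succ_bridge, glue_replaceEdge_bridge hle, glue_inj] at h
      obtain ⟨rfl, rfl⟩ := h
      exact Or.inr (Or.inl ⟨cube_adj_iff_exists_symmDiff.mpr ⟨j, rfl⟩, rfl⟩)
    · rw [slideEdge_zero_map_layer] at h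
      exact absurd h.symm (glue_replaceEdge_flip_ne (hS b).2 (hS' b) he₀)
    · rw [slideEdge_succ_map_layer, glue_replaceEdge_map_layer hle b e₀
        (slideEdge_mem_edgeSet_cube j (edgeSet_mono (hle b) he₀)), glue_inj] at h
      obtain ⟨rfl, rfl⟩ := h
      exact Or.inr (Or.inr ⟨rfl, b, ⟨j, e₀, he₀, by simp⟩, by simp⟩)
  · rintro (⟨rfl, rfl⟩ | ⟨hX, rfl⟩ | ⟨rfl, b, ⟨j, e₀, he₀, h⟩, hb⟩)
    · exact ⟨0, _, hbridge, by rw [slideEdge_zero_bridge, replaceEdge_self hbridge]⟩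
    · obtain ⟨j, rfl⟩ := cube_adj_iff_exists_symmDiff.mp hX
      exact ⟨j.succ, _, hbridge, by rw [slideEdge_succ_bridge, glue_replaceEdge_bridge hle]⟩
    · refine ⟨j.succ, e₀.map (layer b), mem_edgeSet_glue.mpr (Or.inr ⟨b, e₀, he₀, rfl⟩), ?_⟩
      rw [slideEdge_succ_map_layer, glue_replaceEdge_map_layer hle b e₀
        (slideEdge_mem_edgeSet_cube j (edgeSet_mono (hle b) he₀)), ← h]
      congr 1
      funext c
      by_cases hc : c = b
      · subst hc
        simp
      · obtain rfl : c = !b := by cases b <;> cases c <;> simp_all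
        simp [hb]

lemma slideAdj_glue_iff {X' : Finset (Fin m)} {S' : Bool → SimpleGraph (Finset (Fin m))}
    (hS : ∀ b, IsSpanningTreeOf (S b) (cube m)) (hS' : ∀ b, IsSpanningTreeOf (S' b) (cube m)) :
    SlideAdj (m + 1) (glue X S) (glue X' S') ↔
      (cube m).Adj X X' ∧ S = S' ∨ X = X' ∧ ∃ b, SlideAdj m (S b) (S' b) ∧ S (!b) = S' (!b) := by
  have hext {b} (h : S b = S' b) (h' : S (!b) = S' (!b)) : S = S' :=
    funext ((Bool.forall_bool' b).mpr ⟨h, h'⟩)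
  rw [slideAdj_iff, isSlide_glue_iff hS fun b => (hS' b).2.connected,
    isSlide_glue_iff hS' fun b => (hS b).2.connected, Ne, glue_inj]
  simp only [slideAdj_iff]
  constructor
  · rintro ⟨hne, (⟨rfl, rfl⟩ | ⟨hX, rfl⟩ | ⟨rfl, b, hb, hnb⟩) |
      (⟨rfl, rfl⟩ | ⟨hX, rfl⟩ | ⟨rfl, b, hb, hnb⟩)⟩
    · exact absurd ⟨rfl, rfl⟩ hne
    · exact Or.inl ⟨hX, rfl⟩
    · exact Or.inr ⟨rfl, b, ⟨fun h => hne ⟨rfl, hext h hnb.symm⟩, Or.inl hb⟩, hnb.symm⟩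
    · exact absurd ⟨rfl, rfl⟩ hne
    · exact Or.inl ⟨hX.symm, rfl⟩
    · exact Or.inr ⟨rfl, b, ⟨fun h => hne ⟨rfl, hext h hnb⟩, Or.inr hb⟩, hnb⟩
  · rintro (⟨hX, rfl⟩ | ⟨rfl, b, ⟨hne, hb | hb⟩, hnb⟩)
    · exact ⟨fun h => hX.ne h.1, Or.inl (Or.inr (Or.inl ⟨hX, rfl⟩))⟩
    · exact ⟨fun h => hne (congrFun h.2 b), Or.inl (Or.inr (Or.inr ⟨rfl, b, hb, hnb.symm⟩))⟩
    · exact ⟨fun h => hne (congrFun h.2 b), Or.inr (Or.inr (Or.inr ⟨rfl, b, hb, hnb⟩))⟩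

end Slide

section Iso

variable {m : ℕ}

lemma reducesOver_singleton_iff {n : ℕ} {a : Fin n → ℕ} {i : Fin n} :
    ReducesOver a {i} ↔ a i = 1 := by
  simp [ReducesOver]

lemma SpanningTrees.ext_iff {n : ℕ} {T T' : SpanningTrees n} : T = T' ↔ T.1 = T'.1 :=
  Subtype.ext_iff

def reducingTrees (m : ℕ) : Set (SpanningTrees (m + 1)) :=
  {T | ReducesOver (fun i => dirCount T.1 i) {0}}

def layerTrees (q : SpanningTrees m × SpanningTrees m) : Bool → SimpleGraph (Finset (Fin m)) :=
  fun b => bif b then q.2.1 else q.1.1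

lemma layerTrees_isSpanningTreeOf (q : SpanningTrees m × SpanningTrees m) (b : Bool) :
    IsSpanningTreeOf (layerTrees q b) (cube m) := by
  cases b
  exacts [q.1.2, q.2.2]

lemma layerTrees_injective : Function.Injective (layerTrees (m := m)) :=
  fun _ _ h => Prod.ext (Subtype.ext (congrFun h false)) (Subtype.ext (congrFun h true))

def glueTree (p : Finset (Fin m) × (SpanningTrees m × SpanningTrees m)) : reducingTrees m :=
  ⟨⟨glue p.1 (layerTrees p.2), isSpanningTreeOf_glue (layerTrees_isSpanningTreeOf p.2)⟩,
    reducesOver_singleton_iff.mpr dirCount_glue⟩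

lemma glueTree_bijective : Function.Bijective (glueTree (m := m)) := by
  refine ⟨fun p p' h => ?_, fun ⟨⟨T, hT⟩, h⟩ => ?_⟩
  · obtain ⟨hX, hS⟩ := glue_inj.mp (congrArg (fun T => T.1.1) h)
    exact Prod.ext hX (layerTrees_injective hS)
  · obtain ⟨X, S, hS, rfl⟩ := exists_eq_glue hT (reducesOver_singleton_iff.mp h)
    refine ⟨(X, ⟨S false, hS false⟩, ⟨S true, hS true⟩), ?_⟩
    have : layerTrees (⟨S false, hS false⟩, ⟨S true, hS true⟩) = S := by
      funext b
      cases b <;> rfl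
    simp only [glueTree, this]

lemma glueTree_adj_iff {p p' : Finset (Fin m) × (SpanningTrees m × SpanningTrees m)} :
    ((eslide (m + 1)).induce (reducingTrees m)).Adj (glueTree p) (glueTree p') ↔
      ((cube m).boxProd ((eslide m).boxProd (eslide m))).Adj p p' := by
  obtain ⟨X, q⟩ := p
  obtain ⟨X', q'⟩ := p'
  change SlideAdj (m + 1) (glue X (layerTrees q)) (glue X' (layerTrees q')) ↔ _
  rw [slideAdj_glue_iff (layerTrees_isSpanningTreeOf q) (layerTrees_isSpanningTreeOf q'),
    layerTrees_injective.eq_iff, Bool.exists_bool, boxProd_adj, boxProd_adj]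
  simp only [layerTrees, Bool.not_false, Bool.not_true, cond_false, cond_true,
    SpanningTrees.ext_iff]
  exact or_congr_right and_comm

noncomputable def glueIso (m : ℕ) :
    (cube m).boxProd ((eslide m).boxProd (eslide m)) ≃g
      (eslide (m + 1)).induce (reducingTrees m) where
  toEquiv := Equiv.ofBijective glueTree glueTree_bijective
  map_rel_iff' := glueTree_adj_iff

end Iso

/-- Theorem: edge slide graph of trees reducing over `{1}`. For
`n ≥ 2`, the subgraph of the edge slide graph `E(n)` induced by the spanning trees of
`Q_n` reducing over `{1}` (direction `⟨0, _⟩` in 0-based indexing) is isomorphic to the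
box product `Q_{n-1} □ E(n-1) □ E(n-1)`. -/
theorem stmt15 (n : ℕ) (hn : 2 ≤ n) :
    Nonempty
      (((eslide n).induce
          {T : SpanningTrees n |
            ReducesOver (fun i => dirCount T.1 i) {(⟨0, by omega⟩ : Fin n)}}) ≃g
        ((cube (n - 1)).boxProd ((eslide (n - 1)).boxProd (eslide (n - 1))))) := by
  obtain ⟨m, rfl⟩ : ∃ m, n = m + 1 := ⟨n - 1, by omega⟩
  exact ⟨(glueIso m).symm⟩
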